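/- arXiv:1502.05389 — 3 statements merged into one kernel-verified Lean document; each statement's English description precedes it below -/
import Mathlib

section
/- Let V be a finite-dimensional complex vector space of dimension n, and A, B linear endomorphisms of V. A vector x satisfies exp(t(A+B)) x = exp(tA) x for all real t if and only if x lies in the intersection Ker(B) ∩ Ker(B∘A) ∩ Ker(B∘A²) ∩ ... ∩ Ker(B∘A^{n-1}). -/
/-!
Differentiating `exp (t(A+B)) x = exp (tA) x` `k` times and setting `t = 0` gives
`(A+B)^k x = A^k x`; conversely, these equalities make the two exponential series agree term by
term. Since `(A+B)^(k+1) x = A^(k+1) x + B A^k x` once `(A+B)^k x = A^k x`, they amount to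
`B A^k x = 0` for every `k`. Finally, by Cayley–Hamilton every `A^k x` is a linear combination of
`x, A x, …, A^(n-1) x`, so it suffices to check `k < n`.
-/

open NormedSpace Module

open Polynomial in
theorem Module.End.pow_apply_mem_of_forall_lt_finrank {R M : Type*} [CommRing R] [Nontrivial R]
    [AddCommGroup M] [Module R M] [Module.Free R M] [Module.Finite R M]
    (f : Module.End R M) (x : M) {W : Submodule R M} (hW : ∀ i < finrank R M, (f ^ i) x ∈ W)
    (k : ℕ) : (f ^ k) x ∈ W := by
  set r := X ^ k %ₘ f.charpoly
  have hr : r.degree < finrank R M := by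
    rw [← f.charpoly_natDegree, ← degree_eq_natDegree f.charpoly_monic.ne_zero]
    exact degree_modByMonic_lt _ f.charpoly_monic
  have hk : (f ^ k) x = aeval f r x := by
    rw [aeval_modByMonic_eq_self_of_root f.aeval_self_charpoly, aeval_X_pow]
  rw [hk, r.as_sum_support, map_sum, LinearMap.sum_apply]
  refine W.sum_mem fun i hi => ?_
  rw [aeval_monomial, ← Algebra.smul_def, LinearMap.smul_apply]
  exact W.smul_mem _ (hW i (by exact_mod_cast (le_degree_of_mem_supp i hi).trans_lt hr))

theorem add_pow_smul_eq_pow_smul_iff {S M : Type*} [Semiring S] [AddCommGroup M] [Module S M]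
    (a b : S) (x : M) : (∀ k : ℕ, (a + b) ^ k • x = a ^ k • x) ↔ ∀ k : ℕ, b • a ^ k • x = 0 := by
  have succ_eq (k : ℕ) (hk : (a + b) ^ k • x = a ^ k • x) :
      (a + b) ^ (k + 1) • x = a ^ (k + 1) • x + b • a ^ k • x := by
    rw [pow_succ', pow_succ', mul_smul, mul_smul, hk, add_smul]
  constructor
  · intro h k
    simpa [h] using succ_eq k (h k)
  · intro h k
    induction k with
    | zero => simp
    | succ k ih => rw [succ_eq k ih, h, add_zero]

section Exponential

variable {V : Type*} [NormedAddCommGroup V] [NormedSpace ℂ V] [CompleteSpace V]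

theorem exp_apply_eq_tsum (T : V →L[ℂ] V) (v : V) :
    exp T v = ∑' k : ℕ, (k.factorial : ℂ)⁻¹ • (T ^ k) v := by
  rw [exp_eq_tsum ℂ]
  exact (ContinuousLinearMap.apply ℂ V v).map_tsum (expSeries_summable' T)

theorem hasDerivAt_exp_ofReal_smul_apply (T : V →L[ℂ] V) (v : V) (t : ℝ) :
    HasDerivAt (fun s : ℝ => exp ((s : ℂ) • T) v) (exp ((t : ℂ) • T) (T v)) t := by
  have h := (hasDerivAt_exp_smul_const T (t : ℂ)).clm_apply (hasDerivAt_const (t : ℂ) v)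
  simp only [mul_apply_eq_comp, map_zero, add_zero] at h
  simpa [Function.comp_def] using h.scomp t (hasDerivAt_id t).ofReal_comp

theorem exp_ofReal_smul_apply_eq_iff (T S : V →L[ℂ] V) (v w : V) :
    (∀ t : ℝ, exp ((t : ℂ) • T) v = exp ((t : ℂ) • S) w) ↔ ∀ k : ℕ, (T ^ k) v = (S ^ k) w := by
  constructor
  · have deriv_eq (v w : V) (h : ∀ t : ℝ, exp ((t : ℂ) • T) v = exp ((t : ℂ) • S) w) (t : ℝ) :
        exp ((t : ℂ) • T) (T v) = exp ((t : ℂ) • S) (S w) := by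
      rw [← (hasDerivAt_exp_ofReal_smul_apply T v t).deriv,
        ← (hasDerivAt_exp_ofReal_smul_apply S w t).deriv, funext h]
    intro h k
    have iterated : ∀ t : ℝ, exp ((t : ℂ) • T) ((T ^ k) v) = exp ((t : ℂ) • S) ((S ^ k) w) := by
      induction k with
      | zero => exact h
      | succ k ih =>
        intro t
        rw [pow_succ', pow_succ', mul_apply_eq_comp, mul_apply_eq_comp]
        exact deriv_eq _ _ ih t
    simpa using iterated 0
  · intro h t
    simp only [exp_apply_eq_tsum, smul_pow, smul_apply, h]

end Exponential

/-- A vector `x` satisfies `exp(t(A+B)) x = exp(tA) x` for all real `t` iff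
`x ∈ Ker B ∩ Ker (B∘A) ∩ ... ∩ Ker (B∘A^(n-1))`, where `n = dim V`. -/
theorem stmt0 {V : Type*} [NormedAddCommGroup V] [NormedSpace ℂ V]
    [FiniteDimensional ℂ V] (n : ℕ) (hn : n = Module.finrank ℂ V)
    (A B : V →L[ℂ] V) (x : V) :
    (∀ t : ℝ, exp ((t : ℂ) • (A + B)) x = exp ((t : ℂ) • A) x) ↔
      ∀ k < n, B ((A ^ k) x) = 0 := by
  subst hn
  rw [exp_ofReal_smul_apply_eq_iff]
  simp only [← ContinuousLinearMap.smul_def]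
  rw [add_pow_smul_eq_pow_smul_iff]
  simp only [ContinuousLinearMap.smul_def]
  refine ⟨fun h k _ => h k, fun h k => ?_⟩
  have hker := Module.End.pow_apply_mem_of_forall_lt_finrank (A : V →ₗ[ℂ] V) x
    (W := LinearMap.ker (B : V →ₗ[ℂ] V))
    (by simpa [← ContinuousLinearMap.toLinearMap_pow] using h) k
  simpa [← ContinuousLinearMap.toLinearMap_pow] using hker
end

section
/- Let A, B be endomorphisms of a finite-dimensional complex vector space V of dimension n, and M = Ker(B) ∩ Ker(BA) ∩ ... ∩ Ker(BA^{n-1}). Then for every x ∈ M and every t ∈ ℝ, exp(t(A+B)) x = exp(tA) exp(tB) x. -/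
/-!
By Cayley–Hamilton every power `A ^ m` is a polynomial in `A` of degree below
`n = finrank`, so the `n` conditions `B (A ^ k x) = 0`, `k < n`, already give
`B (A ^ m x) = 0` for every `m`. Then `(A + B) ^ m x = A ^ m x` for all `m`, so the exponential
series of `t(A + B)` and of `tA` agree at `x`, while `B x = 0` gives `exp(tB) x = x`.
-/

open NormedSpace Polynomial Module

theorem LinearMap.apply_pow_apply_eq_zero_of_forall_lt_finrank {R V W : Type*} [CommRing R]
    [StrongRankCondition R] [AddCommGroup V] [Module R V] [Module.Free R V] [Module.Finite R V]
    [AddCommGroup W] [Module R W] (A : V →ₗ[R] V) (B : V →ₗ[R] W) (x : V)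
    (h : ∀ k < finrank R V, B ((A ^ k) x) = 0) (m : ℕ) : B ((A ^ m) x) = 0 := by
  have hdeg : (X ^ m %ₘ A.charpoly).degree < finrank R V := by
    have := nontrivial_of_invariantBasisNumber (R := R)
    rw [← A.charpoly_natDegree, ← degree_eq_natDegree A.charpoly_monic.ne_zero]
    exact degree_modByMonic_lt _ A.charpoly_monic
  rw [A.pow_eq_aeval_mod_charpoly, aeval_eq_sum_range, LinearMap.coe_sum, Finset.sum_apply,
    map_sum]
  refine Finset.sum_eq_zero fun k _ => ?_
  rw [LinearMap.smul_apply, map_smul]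
  by_cases hk : k < finrank R V
  · rw [h k hk, smul_zero]
  · rw [coeff_eq_zero_of_degree_lt (hdeg.trans_le (by exact_mod_cast not_lt.mp hk)), zero_smul]

theorem ContinuousLinearMap.add_pow_apply_eq_pow_apply {R V : Type*} [Semiring R]
    [TopologicalSpace V] [AddCommMonoid V] [Module R V] [ContinuousAdd V] (A B : V →L[R] V)
    (x : V) (h : ∀ m, B ((A ^ m) x) = 0) (m : ℕ) : ((A + B) ^ m) x = (A ^ m) x := by
  induction m with
  | zero => rfl
  | succ m ih =>
    rw [pow_succ', pow_succ', mul_apply_eq_comp, mul_apply_eq_comp, ih, add_apply, h m, add_zero]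

section Exponential

variable (𝕜 : Type*) {E : Type*} [RCLike 𝕜] [NormedAddCommGroup E] [NormedSpace 𝕜 E]
  [CompleteSpace E]

theorem NormedSpace.exp_apply_eq_of_pow_apply_eq {T S : E →L[𝕜] E} {x : E}
    (h : ∀ m, (T ^ m) x = (S ^ m) x) : exp T x = exp S x := by
  have hasSum_apply (U : E →L[𝕜] E) :
      HasSum (fun m => ((m.factorial⁻¹ : 𝕜) • U ^ m) x) (exp U x) :=
    (exp_series_hasSum_exp' (𝕂 := 𝕜) U).mapL (ContinuousLinearMap.apply 𝕜 E x)
  refine (hasSum_apply T).unique ?_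
  simpa only [smul_apply, h] using hasSum_apply S

theorem NormedSpace.exp_apply_eq_self_of_apply_eq_zero {T : E →L[𝕜] E} {x : E} (h : T x = 0) :
    exp T x = x := by
  rw [exp_apply_eq_of_pow_apply_eq 𝕜 (S := 0), exp_zero, one_apply_eq_self]
  rintro (_ | m)
  · rfl
  · rw [pow_succ, mul_apply_eq_comp, h, map_zero, zero_pow m.succ_ne_zero, zero_apply]

end Exponential

/-- For `x ∈ M = Ker B ∩ Ker (BA) ∩ ... ∩ Ker (BA^(n-1))` one has
`exp(t(A+B)) x = exp(tA) exp(tB) x` for all real `t`. -/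
theorem stmt4 {V : Type*} [NormedAddCommGroup V] [NormedSpace ℂ V]
    [FiniteDimensional ℂ V] (n : ℕ) (hn : n = Module.finrank ℂ V)
    (A B : V →L[ℂ] V) (x : V) (hx : ∀ k < n, B ((A ^ k) x) = 0) :
    ∀ t : ℝ, exp ((t : ℂ) • (A + B)) x
      = exp ((t : ℂ) • A) (exp ((t : ℂ) • B) x) := by
  have : CompleteSpace V := FiniteDimensional.complete ℂ V
  have hAB (m : ℕ) : B ((A ^ m) x) = 0 := by
    subst hn
    simpa only [← ContinuousLinearMap.toLinearMap_pow, ContinuousLinearMap.coe_coe] using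
      LinearMap.apply_pow_apply_eq_zero_of_forall_lt_finrank A.toLinearMap B.toLinearMap x
        (by simpa only [← ContinuousLinearMap.toLinearMap_pow, ContinuousLinearMap.coe_coe]
          using hx) m
  intro t
  have htAB (m : ℕ) : ((t : ℂ) • B) ((((t : ℂ) • A) ^ m) x) = 0 := by
    rw [_root_.smul_pow, smul_apply, smul_apply, map_smul, hAB m, smul_zero, smul_zero]
  have htB : ((t : ℂ) • B) x = 0 := by simpa only [pow_zero, one_apply_eq_self] using htAB 0
  rw [exp_apply_eq_self_of_apply_eq_zero ℂ htB, smul_add]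
  exact exp_apply_eq_of_pow_apply_eq ℂ (ContinuousLinearMap.add_pow_apply_eq_pow_apply _ _ x htAB)
end

section
/- Consider the qubit generators L₀ρ = −iω[σ_x, ρ] and L_Dρ = γ(σ_z ρ σ_z − ρ) with ω ≠ 0 and γ > 0. Then the subspace M = Ker(L_D) ∩ Ker(L_D∘L₀) ∩ Ker(L_D∘L₀²) ∩ Ker(L_D∘L₀³) consists only of scalar multiples of the identity matrix, i.e. M = ℂ·I; in particular, M contains no nonzero traceless matrix. -/
/-- For `L₀ρ = -iω[σ_x,ρ]` and `L_Dρ = γ(σ_z ρ σ_z - ρ)` with `ω ≠ 0`, `γ > 0`, the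
subspace `M = Ker L_D ∩ Ker (L_D L₀) ∩ Ker (L_D L₀²) ∩ Ker (L_D L₀³)` is exactly the
scalar multiples of the identity matrix. -/
theorem stmt15 (ω γ : ℝ) (hω : ω ≠ 0) (hγ : 0 < γ)
    (σx σz : Matrix (Fin 2) (Fin 2) ℂ)
    (hσx : σx = !![0, 1; 1, 0]) (hσz : σz = !![1, 0; 0, -1])
    (L0 LD : Matrix (Fin 2) (Fin 2) ℂ → Matrix (Fin 2) (Fin 2) ℂ)
    (hL0 : ∀ ρ, L0 ρ = (-Complex.I * ω) • (σx * ρ - ρ * σx))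
    (hLD : ∀ ρ, LD ρ = (γ : ℂ) • (σz * ρ * σz - ρ)) :
    ∀ ρ : Matrix (Fin 2) (Fin 2) ℂ,
      (LD ρ = 0 ∧ LD (L0 ρ) = 0 ∧ LD (L0 (L0 ρ)) = 0 ∧ LD (L0 (L0 (L0 ρ))) = 0) ↔
        ∃ c : ℂ, ρ = c • (1 : Matrix (Fin 2) (Fin 2) ℂ) := by
  have hγ' : (γ : ℂ) ≠ 0 := by exact_mod_cast hγ.ne'
  have hω' : (ω : ℂ) ≠ 0 := by exact_mod_cast hω
  intro ρ
  constructor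
  · rintro ⟨h1, h2, -, -⟩
    have e01 := congr_fun (congr_fun h1 0) 1
    have e10 := congr_fun (congr_fun h1 1) 0
    have f01 := congr_fun (congr_fun h2 0) 1
    simp only [hLD, hL0, hσx, hσz, Matrix.smul_apply, Matrix.sub_apply,
      Matrix.mul_apply, Fin.sum_univ_two, Matrix.of_apply, Matrix.cons_val',
      Matrix.cons_val_zero, Matrix.cons_val_one, Matrix.head_cons,
      Matrix.head_fin_const, Matrix.empty_val', Matrix.cons_val_fin_one,
      Matrix.zero_apply, smul_eq_mul] at e01 e10 f01
    have h2γ : (2 * γ : ℂ) ≠ 0 := mul_ne_zero two_ne_zero hγ'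
    have hb : ρ 0 1 = 0 := by
      have h : (2 * γ : ℂ) * ρ 0 1 = 0 := by linear_combination -e01
      exact (mul_eq_zero.mp h).resolve_left h2γ
    have hc : ρ 1 0 = 0 := by
      have h : (2 * γ : ℂ) * ρ 1 0 = 0 := by linear_combination -e10
      exact (mul_eq_zero.mp h).resolve_left h2γ
    have had : ρ 1 1 = ρ 0 0 := by
      have h : (2 * γ * Complex.I * ω : ℂ) * (ρ 1 1 - ρ 0 0) = 0 := by
        linear_combination f01
      have hcoef : (2 * γ * Complex.I * ω : ℂ) ≠ 0 :=
        mul_ne_zero (mul_ne_zero (mul_ne_zero two_ne_zero hγ') Complex.I_ne_zero) hω'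
      exact sub_eq_zero.mp ((mul_eq_zero.mp h).resolve_left hcoef)
    refine ⟨ρ 0 0, ?_⟩
    ext i j
    fin_cases i <;> fin_cases j <;>
      simp [Matrix.one_apply, hb, hc, had]
  · rintro ⟨c, rfl⟩
    have hL0c : L0 (c • 1) = 0 := by
      rw [hL0]
      simp [Matrix.mul_smul, Matrix.smul_mul]
    have hLDc : LD (c • 1) = 0 := by
      rw [hLD, hσz]
      ext i j
      fin_cases i <;> fin_cases j <;>
        simp [Matrix.mul_apply, Fin.sum_univ_two, Matrix.one_apply]
    have z0 : L0 0 = 0 := by simp [hL0]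
    have zD : LD 0 = 0 := by simp [hLD]
    exact ⟨hLDc, by rw [hL0c, zD], by rw [hL0c, z0, zD], by rw [hL0c, z0, z0, zD]⟩
end
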